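/- arXiv:2006.09587 — 2 statements merged into one kernel-verified Lean document; each statement's English description precedes it below -/
import Mathlib

section
/- Fix σ̲ > 0 and let s₁ ≥ s₂ ≥ … ≥ s_J > 0. Let A be a J×K real matrix and G_b a K×K symmetric positive definite matrix such that the singular values of A G_b^{1/2} are s₁^{-1} ≤ … ≤ s_J^{-1}. Let (U, W) satisfy E[U²|W] ≥ σ̲² a.s. and let b̃(W) ∈ ℝ^K satisfy E[b̃(W)b̃(W)'] = G_b^{-1/2} E[b(W)b(W)'] G_b^{-1/2} = I_K. Define v = ‖A G_b^{1/2} · G_b^{-1/2} E[U² b(W)b(W)'] G_b^{-1/2} · (A G_b^{1/2})'‖_F. Then v ≥ σ̲² (Σ_{j=1}^J s_j^{-4})^{1/2}. -/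
open MeasureTheory ProbabilityTheory Matrix

/-! Write `G = E[b bᵀ]` and `Σ = E[U² b bᵀ]`. Testing against a vector `y`, the weight
`(yᵀ b(W))²` is `W`-measurable, so it pulls out of `E[U² | W] ≥ σ̲²` and gives
`σ̲² yᵀ G y ≤ yᵀ Σ y`. The matrix in the statement is `A Σ Aᵀ`. Conjugating it by the orthogonal `Q`
that diagonalises `A G Aᵀ` preserves the Frobenius norm and, by the quadratic-form bound applied to
the rows of `Qᵀ A`, makes the `j`-th diagonal entry at least `σ̲² s_j⁻²`; the squared Frobenius
norm dominates the sum of the squared diagonal entries. -/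

namespace Matrix

variable {m n R : Type*} [Fintype n]

theorem sum_sq_entries_eq_trace [Fintype m] [CommRing R] (M : Matrix m n R) :
    ∑ i, ∑ j, M i j ^ 2 = trace (Mᵀ * M) := by
  simp only [trace, diag, mul_apply, transpose_apply, sq]
  exact Finset.sum_comm

theorem sum_sq_entries_transpose_mul_mul [DecidableEq n] [CommRing R] {Q : Matrix n n R}
    (hQ : Q * Qᵀ = 1) (M : Matrix n n R) :
    ∑ i, ∑ j, (Qᵀ * M * Q) i j ^ 2 = ∑ i, ∑ j, M i j ^ 2 := by
  rw [sum_sq_entries_eq_trace, sum_sq_entries_eq_trace]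
  have : (Qᵀ * M * Q)ᵀ * (Qᵀ * M * Q) = Qᵀ * (Mᵀ * M) * Q := by
    simp only [transpose_mul, transpose_transpose, Matrix.mul_assoc]
    rw [← Matrix.mul_assoc Q Qᵀ, hQ, Matrix.one_mul]
  rw [this, trace_mul_cycle, hQ, Matrix.one_mul]

theorem sum_sq_diag_le_sum_sq_entries [CommRing R] [LinearOrder R] [IsStrictOrderedRing R]
    (M : Matrix n n R) : ∑ i, M i i ^ 2 ≤ ∑ i, ∑ j, M i j ^ 2 :=
  Finset.sum_le_sum fun i _ =>
    Finset.single_le_sum (f := fun j => M i j ^ 2) (fun _ _ => sq_nonneg _) (Finset.mem_univ i)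

theorem mul_mul_transpose_apply_self [CommRing R] (B : Matrix m n R) (X : Matrix n n R) (i : m) :
    (B * X * Bᵀ) i i = B i ⬝ᵥ X *ᵥ B i := by
  simp only [mul_apply, transpose_apply, dotProduct, mulVec, Finset.mul_sum, Finset.sum_mul]
  rw [Finset.sum_comm]
  exact Finset.sum_congr rfl fun _ _ => Finset.sum_congr rfl fun _ _ => by ring

theorem IsSymm.mul_mul_transpose_cancel_nonsing_inv [CommRing R] [DecidableEq n]
    {H : Matrix n n R} (hH : H.IsSymm) (hdet : IsUnit H.det) (A : Matrix m n R) (S : Matrix n n R) :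
    (A * H) * (H⁻¹ * S * H⁻¹) * (A * H)ᵀ = A * S * Aᵀ := by
  rw [transpose_mul, hH.eq]
  simp only [Matrix.mul_assoc, mul_nonsing_inv_cancel_left _ _ hdet]
  rw [← Matrix.mul_assoc H⁻¹ H, nonsing_inv_mul _ hdet, Matrix.one_mul]

theorem mul_diag_mul_mul_transpose_le [CommRing R] [LinearOrder R] [IsStrictOrderedRing R]
    {c : R} {X Y : Matrix n n R} (h : ∀ y, c * (y ⬝ᵥ X *ᵥ y) ≤ y ⬝ᵥ Y *ᵥ y)
    (B : Matrix m n R) (i : m) : c * (B * X * Bᵀ) i i ≤ (B * Y * Bᵀ) i i := by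
  simpa only [mul_mul_transpose_apply_self] using h (B i)

theorem sum_sq_le_sum_sq_entries_of_le_diag [DecidableEq n] [CommRing R] [LinearOrder R]
    [IsStrictOrderedRing R] {Q M : Matrix n n R} (hQ : Q * Qᵀ = 1) {d : n → R}
    (hd0 : ∀ i, 0 ≤ d i) (hd : ∀ i, d i ≤ (Qᵀ * M * Q) i i) :
    ∑ i, d i ^ 2 ≤ ∑ i, ∑ j, M i j ^ 2 :=
  calc ∑ i, d i ^ 2 ≤ ∑ i, (Qᵀ * M * Q) i i ^ 2 :=
        Finset.sum_le_sum fun i _ => pow_le_pow_left₀ (hd0 i) (hd i) 2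
    _ ≤ ∑ i, ∑ j, (Qᵀ * M * Q) i j ^ 2 := sum_sq_diag_le_sum_sq_entries _
    _ = ∑ i, ∑ j, M i j ^ 2 := sum_sq_entries_transpose_mul_mul hQ M

end Matrix

section SecondMoments

variable {Ω ι : Type*} [Fintype ι] [MeasurableSpace Ω] {μ : Measure Ω}

theorem integrable_mul_of_integrable_sq {f g : Ω → ℝ} (hf : AEStronglyMeasurable f μ)
    (hg : AEStronglyMeasurable g μ) (hf2 : Integrable (fun ω => f ω ^ 2) μ)
    (hg2 : Integrable (fun ω => g ω ^ 2) μ) : Integrable (fun ω => f ω * g ω) μ :=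
  ((memLp_two_iff_integrable_sq hf).2 hf2).integrable_mul ((memLp_two_iff_integrable_sq hg).2 hg2)

theorem mul_dotProduct_sq (w : ℝ) (y x : ι → ℝ) :
    w * (y ⬝ᵥ x) ^ 2 = ∑ k, ∑ l, y k * y l * (w * (x k * x l)) := by
  rw [sq, dotProduct, Finset.sum_mul_sum, Finset.mul_sum]
  refine Finset.sum_congr rfl fun k _ => ?_
  rw [Finset.mul_sum]
  exact Finset.sum_congr rfl fun l _ => by ring

variable {w : Ω → ℝ} {X : Ω → ι → ℝ}

theorem integrable_mul_dotProduct_sq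
    (hint : ∀ k l, Integrable (fun ω => w ω * (X ω k * X ω l)) μ) (y : ι → ℝ) :
    Integrable (fun ω => w ω * (y ⬝ᵥ X ω) ^ 2) μ := by
  simp_rw [mul_dotProduct_sq]
  exact integrable_finsetSum _ fun k _ => integrable_finsetSum _ fun l _ =>
    (hint k l).const_mul _

theorem integral_mul_dotProduct_sq {M : Matrix ι ι ℝ}
    (hint : ∀ k l, Integrable (fun ω => w ω * (X ω k * X ω l)) μ)
    (hM : ∀ k l, ∫ ω, w ω * (X ω k * X ω l) ∂μ = M k l) (y : ι → ℝ) :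
    ∫ ω, w ω * (y ⬝ᵥ X ω) ^ 2 ∂μ = y ⬝ᵥ M *ᵥ y := by
  simp_rw [mul_dotProduct_sq]
  rw [integral_finsetSum _ fun k _ => integrable_finsetSum _ fun l _ => (hint k l).const_mul _]
  simp only [dotProduct, mulVec, Finset.mul_sum]
  refine Finset.sum_congr rfl fun k _ => ?_
  rw [integral_finsetSum _ fun l _ => (hint k l).const_mul _]
  exact Finset.sum_congr rfl fun l _ => by rw [integral_const_mul, hM]; ring

end SecondMoments

section ConditionalLowerBound

variable {Ω : Type*} {m m₀ : MeasurableSpace Ω} {μ : Measure Ω} {f : Ω → ℝ} {c : ℝ}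

theorem integrable_of_pos_le_condExp [NeZero μ] (hc0 : 0 < c) (hc : ∀ᵐ ω ∂μ, c ≤ μ[f | m] ω) :
    Integrable f μ := by
  by_contra hf
  rw [condExp_of_not_integrable hf] at hc
  obtain ⟨ω, hω⟩ := hc.exists
  exact hc0.not_ge hω

theorem mul_integral_le_integral_mul_of_le_condExp (hm : m ≤ m₀) [SigmaFinite (μ.trim hm)]
    {g : Ω → ℝ} (hf : Integrable f μ) (hg : StronglyMeasurable[m] g) (hg0 : 0 ≤ g)
    (hgi : Integrable g μ) (hfg : Integrable (f * g) μ) (hc : ∀ᵐ ω ∂μ, c ≤ μ[f | m] ω) :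
    c * ∫ ω, g ω ∂μ ≤ ∫ ω, f ω * g ω ∂μ := by
  have hpull : μ[f * g | m] =ᵐ[μ] μ[f | m] * g :=
    condExp_mul_of_stronglyMeasurable_right hg hfg hf
  calc c * ∫ ω, g ω ∂μ = ∫ ω, c * g ω ∂μ := (integral_const_mul c _).symm
    _ ≤ ∫ ω, (μ[f | m] * g) ω ∂μ := by
        refine integral_mono_ae (hgi.const_mul c) (integrable_condExp.congr hpull) ?_
        filter_upwards [hc] with ω hω
        exact mul_le_mul_of_nonneg_right hω (hg0 ω)
    _ = ∫ ω, (μ[f * g | m]) ω ∂μ := integral_congr_ae hpull.symm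
    _ = ∫ ω, f ω * g ω ∂μ := integral_condExp hm

end ConditionalLowerBound

theorem mul_dotProduct_mulVec_le_of_le_condExp {Ω β ι : Type*} [Fintype ι] [MeasurableSpace Ω]
    [MeasurableSpace β] {μ : Measure Ω} [IsFiniteMeasure μ] {W : Ω → β} (hW : Measurable W)
    {X : β → ι → ℝ} (hX : ∀ k, Measurable fun x => X x k) {f : Ω → ℝ} (hf : Integrable f μ)
    {c : ℝ} (hc : ∀ᵐ ω ∂μ, c ≤ μ[f | MeasurableSpace.comap W inferInstance] ω)
    {G S : Matrix ι ι ℝ} (hXX : ∀ k l, Integrable (fun ω => X (W ω) k * X (W ω) l) μ)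
    (hG : ∀ k l, ∫ ω, X (W ω) k * X (W ω) l ∂μ = G k l)
    (hfXX : ∀ k l, Integrable (fun ω => f ω * (X (W ω) k * X (W ω) l)) μ)
    (hS : ∀ k l, ∫ ω, f ω * (X (W ω) k * X (W ω) l) ∂μ = S k l) (y : ι → ℝ) :
    c * (y ⬝ᵥ G *ᵥ y) ≤ y ⬝ᵥ S *ᵥ y := by
  have hXX' : ∀ k l, Integrable (fun ω => 1 * (X (W ω) k * X (W ω) l)) μ := by
    simpa only [one_mul] using hXX
  have hG' : ∀ k l, ∫ ω, 1 * (X (W ω) k * X (W ω) l) ∂μ = G k l := by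
    simpa only [one_mul] using hG
  have hg : StronglyMeasurable[MeasurableSpace.comap W inferInstance]
      fun ω => (y ⬝ᵥ X (W ω)) ^ 2 := by
    have hXW : Measurable[MeasurableSpace.comap W inferInstance] W := comap_measurable W
    simp only [dotProduct]
    exact (Measurable.pow_const (Finset.measurable_sum _ fun k _ =>
      ((hX k).comp hXW).const_mul _) 2).stronglyMeasurable
  rw [← integral_mul_dotProduct_sq hXX' hG', ← integral_mul_dotProduct_sq hfXX hS]
  simp only [one_mul]
  exact mul_integral_le_integral_mul_of_le_condExp hW.comap_le hf hg (fun ω => sq_nonneg _)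
    (by simpa only [one_mul] using integrable_mul_dotProduct_sq hXX' y)
    (integrable_mul_dotProduct_sq hfXX y) hc

theorem frobenius_lower_bound_variance_general {Ω β : Type*} [MeasurableSpace Ω] [MeasurableSpace β]
    (μ : Measure Ω) [IsProbabilityMeasure μ]
    (J K : ℕ) (U : Ω → ℝ) (W : Ω → β) (b : β → Fin K → ℝ)
    (hW : Measurable W) (hb : ∀ k, Measurable fun x => b x k)
    (σlow : ℝ) (hσ : 0 < σlow)
    (hcond : ∀ᵐ ω ∂μ,
      σlow ^ 2 ≤ (μ[fun ω' => (U ω') ^ 2 | MeasurableSpace.comap W inferInstance]) ω)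
    (A : Matrix (Fin J) (Fin K) ℝ) (Gbh : Matrix (Fin K) (Fin K) ℝ)
    (hGbhsymm : Gbh.IsSymm) (hGbpd : (Gbh * Gbh).PosDef)
    (s : Fin J → ℝ)
    (hQ : ∃ Q : Matrix (Fin J) (Fin J) ℝ, Q * Qᵀ = 1 ∧ Qᵀ * Q = 1 ∧
      Qᵀ * (A * (Gbh * Gbh) * Aᵀ) * Q = Matrix.diagonal fun j => ((s j) ^ 2)⁻¹)
    (hGb : ∀ j l, ∫ ω, b (W ω) j * b (W ω) l ∂μ = (Gbh * Gbh) j l)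
    (hint : ∀ j l, Integrable (fun ω => (U ω) ^ 2 * (b (W ω) j * b (W ω) l)) μ)
    (Sig : Matrix (Fin K) (Fin K) ℝ)
    (hSig : ∀ j l, Sig j l = ∫ ω, (U ω) ^ 2 * (b (W ω) j * b (W ω) l) ∂μ) :
    σlow ^ 2 * Real.sqrt (∑ j, ((s j) ^ 4)⁻¹) ≤
      Real.sqrt (∑ j, ∑ l,
        (((A * Gbh) * (Gbh⁻¹ * Sig * Gbh⁻¹) * (A * Gbh)ᵀ) j l) ^ 2) := by
  obtain ⟨Q, hQQ, -, hdiag⟩ := hQ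
  have hGbh_det : IsUnit Gbh.det := (mul_self_pos.1 (det_mul Gbh Gbh ▸ hGbpd.det_pos)).isUnit
  have hbW : ∀ k, AEStronglyMeasurable (fun ω => b (W ω) k) μ :=
    fun k => ((hb k).comp hW).aestronglyMeasurable
  -- `∫ b_k² = G_kk > 0`, and a non-integrable function would have integral `0`.
  have hb_sq : ∀ k, Integrable (fun ω => b (W ω) k ^ 2) μ := fun k =>
    Integrable.of_integral_ne_zero (by simpa only [sq, hGb] using hGbpd.diag_pos.ne')
  have hquad : ∀ y, σlow ^ 2 * (y ⬝ᵥ (Gbh * Gbh) *ᵥ y) ≤ y ⬝ᵥ Sig *ᵥ y :=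
    mul_dotProduct_mulVec_le_of_le_condExp hW hb
      (integrable_of_pos_le_condExp (pow_pos hσ 2) hcond) hcond
      (fun k l => integrable_mul_of_integrable_sq (hbW k) (hbW l) (hb_sq k) (hb_sq l)) hGb hint
      (fun k l => (hSig k l).symm)
  have hconj : ∀ X : Matrix (Fin K) (Fin K) ℝ,
      Qᵀ * A * X * (Qᵀ * A)ᵀ = Qᵀ * (A * X * Aᵀ) * Q := fun X => by
    simp only [transpose_mul, transpose_transpose, Matrix.mul_assoc]
  have hdiag_le : ∀ j, σlow ^ 2 * (s j ^ 2)⁻¹ ≤ (Qᵀ * (A * Sig * Aᵀ) * Q) j j := fun j => by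
    simpa only [hconj, hdiag, diagonal_apply_eq] using
      mul_diag_mul_mul_transpose_le hquad (Qᵀ * A) j
  rw [hGbhsymm.mul_mul_transpose_cancel_nonsing_inv hGbh_det]
  calc σlow ^ 2 * Real.sqrt (∑ j, (s j ^ 4)⁻¹)
      = Real.sqrt ((σlow ^ 2) ^ 2 * ∑ j, (s j ^ 4)⁻¹) := by
        rw [Real.sqrt_mul (by positivity), Real.sqrt_sq (by positivity)]
    _ = Real.sqrt (∑ j, (σlow ^ 2 * (s j ^ 2)⁻¹) ^ 2) := by
        rw [Finset.mul_sum]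
        exact congrArg Real.sqrt (Finset.sum_congr rfl fun j _ => by ring)
    _ ≤ _ := Real.sqrt_le_sqrt
        (sum_sq_le_sum_sq_entries_of_le_diag hQQ (fun j => by positivity) hdiag_le)

/-- Lower bound for the normalization factor: if `E[U²|W] ≥ σ̲²` a.s., the singular values of
`A G_b^{1/2}` are `s₁⁻¹ ≤ … ≤ s_J⁻¹`, and `E[b(W)b(W)'] = G_b`, then
`v = ‖A G_b^{1/2} · G_b^{-1/2} E[U² b b'] G_b^{-1/2} · (A G_b^{1/2})'‖_F ≥ σ̲² (Σ_j s_j⁻⁴)^{1/2}`. -/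
theorem frobenius_lower_bound_variance {Ω β : Type*} [MeasurableSpace Ω] [MeasurableSpace β]
    (μ : Measure Ω) [IsProbabilityMeasure μ]
    (J K : ℕ) (U : Ω → ℝ) (W : Ω → β) (b : β → Fin K → ℝ)
    (hU : Measurable U) (hW : Measurable W) (hb : ∀ k, Measurable fun x => b x k)
    (σlow : ℝ) (hσ : 0 < σlow)
    (hcond : ∀ᵐ ω ∂μ,
      σlow ^ 2 ≤ (μ[fun ω' => (U ω') ^ 2 | MeasurableSpace.comap W inferInstance]) ω)
    (A : Matrix (Fin J) (Fin K) ℝ) (Gbh : Matrix (Fin K) (Fin K) ℝ)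
    (hGbhsymm : Gbh.IsSymm) (hGbpd : (Gbh * Gbh).PosDef)
    (s : Fin J → ℝ) (hspos : ∀ j, 0 < s j)
    (hmono : ∀ j j' : Fin J, j ≤ j' → s j' ≤ s j)
    (hQ : ∃ Q : Matrix (Fin J) (Fin J) ℝ, Q * Qᵀ = 1 ∧ Qᵀ * Q = 1 ∧
      Qᵀ * (A * (Gbh * Gbh) * Aᵀ) * Q = Matrix.diagonal fun j => ((s j) ^ 2)⁻¹)
    (hGb : ∀ j l, ∫ ω, b (W ω) j * b (W ω) l ∂μ = (Gbh * Gbh) j l)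
    (hint : ∀ j l, Integrable (fun ω => (U ω) ^ 2 * (b (W ω) j * b (W ω) l)) μ)
    (Sig : Matrix (Fin K) (Fin K) ℝ)
    (hSig : ∀ j l, Sig j l = ∫ ω, (U ω) ^ 2 * (b (W ω) j * b (W ω) l) ∂μ) :
    σlow ^ 2 * Real.sqrt (∑ j, ((s j) ^ 4)⁻¹) ≤
      Real.sqrt (∑ j, ∑ l,
        (((A * Gbh) * (Gbh⁻¹ * Sig * Gbh⁻¹) * (A * Gbh)ᵀ) j l) ^ 2) :=
  frobenius_lower_bound_variance_general μ J K U W b hW hb σlow hσ hcond A Gbh hGbhsymm hGbpd s hQ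
    hGb hint Sig hSig
end

section
/- Let q(a, k) denote the upper a-quantile of the chi-square distribution with k degrees of freedom, i.e., P(χ²_k > q(a,k)) = a. Then for all k ≥ 1 and all a ∈ (0,1), q(a, k) ≤ k + 2√(k·log(1/a)) + 2·log(1/a). -/
/-!
Chernoff's method for the Gamma law: for `0 < s ≤ r` the density of `Gamma(a, r)` equals
`(r/s)^a e^{-(r-s)x}` times that of `Gamma(a, s)`, so on `(B, ∞)` it is dominated by
`(r/s)^a e^{-(r-s)B}` times a probability density. Choosing `s = a/B` gives the tail bound
`(rB/a)^a e^{a-rB}`. For `χ²_k = Gamma(k/2, 1/2)` at `B = k + 2√(kt) + 2t` this is at most `e^{-t}`,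
because `B/k = 1 + 2u + 2u² ≤ e^{2u}` with `u = √(t/k)`. Since the tail is strictly decreasing on
`[0, ∞)`, a quantile beyond `B` would have tail mass strictly below `e^{-t} = a`.
-/

open MeasureTheory ProbabilityTheory Real Set

namespace ProbabilityTheory

theorem gammaPDFReal_eq_rpow_mul_exp_mul_gammaPDFReal {a r s : ℝ} (hr : 0 ≤ r) (hs : 0 < s)
    (x : ℝ) :
    gammaPDFReal a r x = (r / s) ^ a * exp (-((r - s) * x)) * gammaPDFReal a s x := by
  unfold gammaPDFReal
  split_ifs
  · rw [div_rpow hr hs.le, show -(r * x) = -((r - s) * x) + -(s * x) by ring, exp_add]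
    field_simp
  · simp

theorem gammaMeasure_Ioi_le_rpow_mul_exp {a r s : ℝ} (ha : 0 < a) (hs : 0 < s) (hsr : s ≤ r)
    (B : ℝ) :
    gammaMeasure a r (Ioi B) ≤ ENNReal.ofReal ((r / s) ^ a * exp (-((r - s) * B))) := by
  have hr : 0 ≤ r := hs.le.trans hsr
  have := isProbabilityMeasure_gammaMeasure ha hs
  set C := (r / s) ^ a * exp (-((r - s) * B)) with hC_def
  have hC : 0 ≤ C := by positivity
  have hdom : ∀ x ∈ Ioi B, gammaPDF a r x ≤ ENNReal.ofReal C * gammaPDF a s x := by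
    intro x hx
    rw [gammaPDF, gammaPDF, ← ENNReal.ofReal_mul hC,
      gammaPDFReal_eq_rpow_mul_exp_mul_gammaPDFReal hr hs, hC_def]
    have := gammaPDFReal_nonneg ha hs x
    gcongr
    exact hx.le
  calc gammaMeasure a r (Ioi B) = ∫⁻ x in Ioi B, gammaPDF a r x :=
        withDensity_apply _ measurableSet_Ioi
    _ ≤ ∫⁻ x in Ioi B, ENNReal.ofReal C * gammaPDF a s x :=
        setLIntegral_mono' measurableSet_Ioi hdom
    _ = ENNReal.ofReal C * gammaMeasure a s (Ioi B) := by
        rw [lintegral_const_mul' _ _ ENNReal.ofReal_ne_top, gammaMeasure,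
          withDensity_apply _ measurableSet_Ioi]
    _ ≤ ENNReal.ofReal C := mul_le_of_le_one_right' prob_le_one

noncomputable def gammaTailBound (a r B : ℝ) : ℝ := (r * B / a) ^ a * exp (a - r * B)

theorem gammaMeasure_Ioi_le_gammaTailBound {a r B : ℝ} (ha : 0 < a) (hr : 0 < r)
    (hB : a ≤ r * B) :
    gammaMeasure a r (Ioi B) ≤ ENNReal.ofReal (gammaTailBound a r B) := by
  have hB0 : 0 < B := pos_of_mul_pos_right (ha.trans_le hB) hr.le
  rw [gammaTailBound]
  convert gammaMeasure_Ioi_le_rpow_mul_exp ha (div_pos ha hB0)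
    ((div_le_iff₀ hB0).2 hB) B using 4
  · rw [div_div_eq_mul_div]
  · field_simp
    ring

theorem gammaTailBound_half_le_exp_neg {k t : ℝ} (hk : 0 < k) (ht : 0 ≤ t) :
    gammaTailBound (k / 2) (1 / 2) (k + 2 * √(k * t) + 2 * t) ≤ exp (-t) := by
  obtain ⟨p, hp, rfl⟩ : ∃ p, 0 < p ∧ k = p ^ 2 := ⟨√k, sqrt_pos.2 hk, (sq_sqrt hk.le).symm⟩
  obtain ⟨s, hs, rfl⟩ : ∃ s, 0 ≤ s ∧ t = s ^ 2 := ⟨√t, sqrt_nonneg t, (sq_sqrt ht).symm⟩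
  have hsqrt : √(p ^ 2 * s ^ 2) = p * s := by rw [← mul_pow, sqrt_sq (by positivity)]
  have hratio : 1 / 2 * (p ^ 2 + 2 * (p * s) + 2 * s ^ 2) / (p ^ 2 / 2)
      = 1 + 2 * (s / p) + (2 * (s / p)) ^ 2 / 2 := by
    field_simp
  have hpow : exp (2 * (s / p)) ^ (p ^ 2 / 2) = exp (p * s) := by
    rw [← exp_mul]
    congr 1
    field_simp
  rw [gammaTailBound, hsqrt, hratio]
  calc (1 + 2 * (s / p) + (2 * (s / p)) ^ 2 / 2) ^ (p ^ 2 / 2)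
          * exp (p ^ 2 / 2 - 1 / 2 * (p ^ 2 + 2 * (p * s) + 2 * s ^ 2))
      ≤ exp (2 * (s / p)) ^ (p ^ 2 / 2)
          * exp (p ^ 2 / 2 - 1 / 2 * (p ^ 2 + 2 * (p * s) + 2 * s ^ 2)) := by
        gcongr
        exact quadratic_le_exp_of_nonneg (by positivity)
    _ = exp (-s ^ 2) := by
        rw [hpow, ← exp_add]
        congr 1
        ring

theorem strictAntiOn_gammaMeasure_Ioi {a r : ℝ} (ha : 0 < a) (hr : 0 < r) :
    StrictAntiOn (fun B => gammaMeasure a r (Ioi B)) (Ici 0) := by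
  intro B hB q _ hBq
  dsimp only
  have := isProbabilityMeasure_gammaMeasure ha hr
  have hmid : gammaMeasure a r (Ioc B q) ≠ 0 := by
    intro h
    rw [gammaMeasure, withDensity_apply_eq_zero' (f := gammaPDF a r)
      (measurable_gammaPDFReal a r).ennreal_ofReal.aemeasurable] at h
    have hsub : Ioc B q ⊆ {x | gammaPDF a r x ≠ 0} ∩ Ioc B q := fun x hx =>
      ⟨(ENNReal.ofReal_pos.2 (gammaPDFReal_pos ha hr ((mem_Ici.1 hB).trans_lt hx.1))).ne', hx⟩
    have hvol : volume (Ioc B q) = 0 := measure_mono_null hsub h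
    rw [volume_Ioc, ENNReal.ofReal_eq_zero] at hvol
    linarith
  rw [← Ioc_union_Ioi_eq_Ioi hBq.le, measure_union Ioc_disjoint_Ioi_same measurableSet_Ioi,
    add_comm]
  exact ENNReal.lt_add_right (measure_ne_top _ _) hmid

end ProbabilityTheory

/-- Laurent–Massart bound on chi-square quantiles: if `q = q(a,k)` is the upper `a`-quantile
of the chi-square distribution with `k` degrees of freedom (i.e. `P(χ²_k > q) = a`), then
`q ≤ k + 2√(k log(1/a)) + 2 log(1/a)`. The chi-square distribution with `k` degrees of
freedom is the Gamma distribution with shape `k/2` and rate `1/2`. -/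
theorem chiSq_quantile_upper_bound (k : ℕ) (hk : 1 ≤ k)
    (a : ℝ) (ha : a ∈ Set.Ioo (0 : ℝ) 1) (q : ℝ)
    (hq : gammaMeasure ((k : ℝ) / 2) (1 / 2) {x | q < x} = ENNReal.ofReal a) :
    q ≤ (k : ℝ) + 2 * Real.sqrt (k * Real.log (1 / a)) + 2 * Real.log (1 / a) := by
  obtain ⟨ha0, ha1⟩ := ha
  have hk0 : (0 : ℝ) < k := by exact_mod_cast hk
  have hat : exp (-log (1 / a)) = a := by rw [one_div, log_inv, neg_neg, exp_log ha0]
  set t := log (1 / a)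
  have ht : 0 ≤ t := log_nonneg ((one_le_div ha0).2 ha1.le)
  set B := (k : ℝ) + 2 * √(k * t) + 2 * t
  have hB0 : 0 ≤ B := by positivity
  have hB : (k : ℝ) / 2 ≤ 1 / 2 * B := by linarith [sqrt_nonneg (k * t)]
  have htail : gammaMeasure ((k : ℝ) / 2) (1 / 2) (Ioi B) ≤ ENNReal.ofReal a :=
    (gammaMeasure_Ioi_le_gammaTailBound (by positivity) one_half_pos hB).trans
      (ENNReal.ofReal_le_ofReal (hat ▸ gammaTailBound_half_le_exp_neg hk0 ht))
  by_contra! hqB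
  exact (strictAntiOn_gammaMeasure_Ioi (by positivity) one_half_pos hB0 (hB0.trans hqB.le)
    hqB).not_ge (hq ▸ htail)
end
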